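/- There exists a universal constant c > 0 such that for every integer m ≥ 2, every real H ≥ 2, every ε ∈ (0, 1/2), and every probability distribution D supported on the set of monotone valuations {v ∈ [1, H]^m : v_1 ≤ v_2 ≤ … ≤ v_m}, there exists a menu M with at most m^{c·((log₂ H)³ + (log₂(1/ε))²)/ε²} entries such that Rev_D(M) ≥ (1 − ε) · OPT(D). -/

import Mathlib

/-!
Take a menu `A` with a selection `s` of revenue close to `OPT`, and discount its prices by
`1 - ε`. Round each valuation `v` down, coordinatewise, to a power of `1 + δ`; the rounding `w`
of a monotone `v` is monotone, so only `(m + 1) ^ L` grid points occur, with `L ≈ log H / δ`.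
Every grid point chooses from the discounted `A`, and these choices, discounted once more, form
the new menu.

Discounting by `1 - ε` favours the more expensive of two entries by `ε` times their price gap,
whereas `v` and `w` value every lottery within a factor `1 + δ` of each other. Hence passing from
`v` choosing in `A` to `w` choosing in the discounted `A`, and from `w` back to `v` choosing in the
new menu, each lose at most `O(δ / ε) · max v` of price. Finally `E[max v] ≤ 4 log₂ H · OPT`,
by writing `max v` as a sum of dyadic posted prices, so `δ ≈ ε² / log H` makes the total loss
`O(ε) · OPT`.
-/

open MeasureTheory

/-- An entry of a menu: a lottery (vector of allocation probabilities) together with a price. -/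
abbrev Entry (m : ℕ) := (Fin m → ℝ) × ℝ

/-- A lottery: nonnegative coordinates summing to at most 1. -/
def IsLottery (m : ℕ) (x : Fin m → ℝ) : Prop := (∀ j, 0 ≤ x j) ∧ ∑ j, x j ≤ 1

/-- A menu: a finite set of entries containing the null entry `(0, 0)`,
all of whose entries are lotteries. -/
def IsMenu (m : ℕ) (M : Finset (Entry m)) : Prop :=
  (0, 0) ∈ M ∧ ∀ e ∈ M, IsLottery m e.1

/-- Utility of entry `e` for a buyer with valuation `v`. -/
def utility {m : ℕ} (v : Fin m → ℝ) (e : Entry m) : ℝ := (∑ j, v j * e.1 j) - e.2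

/-- A selection rule for menu `M`: picks, for each valuation, a utility-maximizing entry of `M`. -/
def IsSelection {m : ℕ} (M : Finset (Entry m)) (s : (Fin m → ℝ) → Entry m) : Prop :=
  ∀ v, s v ∈ M ∧ ∀ e ∈ M, utility v e ≤ utility v (s v)

/-- Revenue of a selection rule `s` under distribution `D`: expected price paid. -/
noncomputable def revSel {m : ℕ} (D : Measure (Fin m → ℝ))
    (s : (Fin m → ℝ) → Entry m) : ℝ :=
  ∫ v, (s v).2 ∂D

/-- Revenue of menu `M` under distribution `D`: supremum over selection rules. -/
noncomputable def Rev {m : ℕ} (D : Measure (Fin m → ℝ)) (M : Finset (Entry m)) : ℝ :=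
  sSup {r | ∃ s, IsSelection M s ∧ r = revSel D s}

/-- Optimal revenue for a distribution `D`: supremum over all menus. -/
noncomputable def OPT {m : ℕ} (D : Measure (Fin m → ℝ)) : ℝ :=
  sSup {r | ∃ M : Finset (Entry m), IsMenu m M ∧ r = Rev D M}

noncomputable section Selection

variable {m : ℕ}

/-- A fold rather than an argmax, so that measurability in `v` follows by induction on `l`. -/
def bestEntry (l : List (Entry m)) (v : Fin m → ℝ) : Entry m :=
  l.foldr (fun e r => if utility v e < utility v r then r else e) (0, 0)

lemma bestEntry_cons (e : Entry m) (l : List (Entry m)) (v : Fin m → ℝ) :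
    bestEntry (e :: l) v = if utility v e < utility v (bestEntry l v) then bestEntry l v else e :=
  rfl

lemma bestEntry_eq_zero_or_mem (l : List (Entry m)) (v : Fin m → ℝ) :
    bestEntry l v = (0, 0) ∨ bestEntry l v ∈ l := by
  induction l with
  | nil => exact Or.inl rfl
  | cons e l ih =>
    rw [bestEntry_cons]
    split_ifs
    · exact ih.imp_right (List.mem_cons_of_mem e)
    · exact Or.inr List.mem_cons_self

lemma utility_le_bestEntry {l : List (Entry m)} {e : Entry m} (he : e ∈ l) (v : Fin m → ℝ) :
    utility v e ≤ utility v (bestEntry l v) := by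
  induction l with
  | nil => simp at he
  | cons e' l ih =>
    rw [bestEntry_cons]
    rcases List.mem_cons.1 he with rfl | he
    · split_ifs with h
      exacts [h.le, le_rfl]
    · split_ifs with h
      exacts [ih he, (ih he).trans (not_lt.1 h)]

lemma measurable_utility : Measurable fun p : (Fin m → ℝ) × Entry m => utility p.1 p.2 := by
  unfold utility
  fun_prop

lemma measurable_bestEntry (l : List (Entry m)) : Measurable (bestEntry l) := by
  induction l with
  | nil => exact measurable_const
  | cons e l ih =>
    have hlt : MeasurableSet {v | utility v e < utility v (bestEntry l v)} :=
      measurableSet_lt (measurable_utility.comp (measurable_id.prodMk measurable_const))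
        (measurable_utility.comp (measurable_id.prodMk ih))
    exact Measurable.ite hlt ih measurable_const

def canonicalSel (M : Finset (Entry m)) : (Fin m → ℝ) → Entry m := bestEntry M.toList

lemma isSelection_canonicalSel {M : Finset (Entry m)} (h0 : (0, 0) ∈ M) :
    IsSelection M (canonicalSel M) := fun v =>
  ⟨(bestEntry_eq_zero_or_mem M.toList v).elim (fun h => by rwa [canonicalSel, h])
      Finset.mem_toList.1,
    fun _ he => utility_le_bestEntry (Finset.mem_toList.2 he) v⟩

lemma measurable_canonicalSel (M : Finset (Entry m)) : Measurable (canonicalSel M) :=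
  measurable_bestEntry _

end Selection

section Revenue

variable {m : ℕ} {D : Measure (Fin m → ℝ)} {M : Finset (Entry m)} {s : (Fin m → ℝ) → Entry m}

lemma IsLottery.sum_mul_le {x : Fin m → ℝ} (hx : IsLottery m x) {v : Fin m → ℝ} {b : ℝ}
    (hb : 0 ≤ b) (hv : ∀ j, v j ≤ b) : ∑ j, v j * x j ≤ b :=
  calc ∑ j, v j * x j ≤ ∑ j, b * x j :=
        Finset.sum_le_sum fun j _ => mul_le_mul_of_nonneg_right (hv j) (hx.1 j)
    _ = b * ∑ j, x j := (Finset.mul_sum ..).symm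
    _ ≤ b := mul_le_of_le_one_right hb hx.2

lemma utility_zero (v : Fin m → ℝ) : utility v (0, 0) = 0 := by
  simp [utility]

lemma IsSelection.price_le (hs : IsSelection M s) (h0 : (0, 0) ∈ M) (v : Fin m → ℝ) :
    (s v).2 ≤ ∑ j, v j * (s v).1 j := by
  have := (hs v).2 _ h0
  rw [utility_zero, utility, sub_nonneg] at this
  exact this

lemma IsSelection.abs_price_le (hs : IsSelection M s) (v : Fin m → ℝ) :
    |(s v).2| ≤ ∑ e ∈ M, |e.2| :=
  Finset.single_le_sum (f := fun e : Entry m => |e.2|) (fun _ _ => abs_nonneg _) (hs v).1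

lemma revSel_le_of_ae_le [IsProbabilityMeasure D] {b : ℝ} (hb : 0 ≤ b)
    (h : ∀ᵐ v ∂D, (s v).2 ≤ b) : revSel D s ≤ b := by
  by_cases hi : Integrable (fun v => (s v).2) D
  · simpa [revSel] using integral_mono_ae hi (integrable_const b) h
  · rw [revSel, integral_undef hi]
    exact hb

lemma revSel_le_Rev [IsProbabilityMeasure D] (hs : IsSelection M s) : revSel D s ≤ Rev D M := by
  refine le_csSup ⟨∑ e ∈ M, |e.2|, ?_⟩ ⟨s, hs, rfl⟩
  rintro _ ⟨s', hs', rfl⟩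
  exact revSel_le_of_ae_le (Finset.sum_nonneg fun _ _ => abs_nonneg _)
    (ae_of_all _ fun v => (le_abs_self _).trans (hs'.abs_price_le v))

lemma integrable_price_canonicalSel [IsFiniteMeasure D] (h0 : (0, 0) ∈ M) :
    Integrable (fun v => (canonicalSel M v).2) D :=
  Integrable.of_bound (measurable_canonicalSel M).snd.aestronglyMeasurable _
    (ae_of_all _ fun v => (isSelection_canonicalSel h0).abs_price_le v)

lemma exists_isSelection_lt_revSel {r : ℝ} (hr : r < OPT D) :
    ∃ A s, IsMenu m A ∧ IsSelection A s ∧ r < revSel D s := by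
  have hnull : IsMenu m {(0, 0)} := ⟨Finset.mem_singleton_self _, by simp [IsLottery]⟩
  rw [OPT] at hr
  obtain ⟨_, ⟨A, hA, rfl⟩, hrA⟩ := exists_lt_of_lt_csSup (by exact ⟨_, _, hnull, rfl⟩) hr
  rw [Rev] at hrA
  obtain ⟨_, ⟨s, hs, rfl⟩, hrs⟩ :=
    exists_lt_of_lt_csSup (by exact ⟨_, _, isSelection_canonicalSel hA.1, rfl⟩) hrA
  exact ⟨A, s, hA, hs, hrs⟩

variable [IsProbabilityMeasure D] {H : ℝ}

lemma Rev_le (hH : 0 ≤ H) (hD : ∀ᵐ v ∂D, ∀ j, v j ≤ H) (hM : IsMenu m M) : Rev D M ≤ H := by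
  refine Real.sSup_le ?_ hH
  rintro _ ⟨s, hs, rfl⟩
  refine revSel_le_of_ae_le hH ?_
  filter_upwards [hD] with v hv
  exact (hs.price_le hM.1 v).trans ((hM.2 _ (hs v).1).sum_mul_le hH hv)

lemma Rev_le_OPT (hH : 0 ≤ H) (hD : ∀ᵐ v ∂D, ∀ j, v j ≤ H) (hM : IsMenu m M) :
    Rev D M ≤ OPT D := by
  refine le_csSup ⟨H, ?_⟩ ⟨M, hM, rfl⟩
  rintro _ ⟨M', hM', rfl⟩
  exact Rev_le hH hD hM'

end Revenue

section PostedPrice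

variable {m : ℕ} {D : Measure (Fin m → ℝ)} [IsProbabilityMeasure D] {H : ℝ}

lemma utility_single (v : Fin m → ℝ) (j : Fin m) (θ : ℝ) :
    utility v (Pi.single j 1, θ) = v j - θ := by
  simp [utility, Pi.single_apply]

lemma isMenu_postedPrice (j : Fin m) (θ : ℝ) : IsMenu m {(0, 0), (Pi.single j 1, θ)} := by
  refine ⟨Finset.mem_insert_self _ _, ?_⟩
  simp only [Finset.mem_insert, Finset.mem_singleton, forall_eq_or_imp, forall_eq]
  refine ⟨⟨fun _ => le_rfl, by simp⟩, fun i => ?_, by simp⟩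
  rw [Pi.single_apply]
  split_ifs <;> norm_num

lemma mul_measureReal_le_OPT (hH : 0 ≤ H) (hD : ∀ᵐ v ∂D, ∀ j, v j ≤ H) (j : Fin m) (θ : ℝ) :
    θ * D.real {v | θ ≤ v j} ≤ OPT D := by
  set s : (Fin m → ℝ) → Entry m := fun v => if θ ≤ v j then (Pi.single j 1, θ) else (0, 0)
  have hs : IsSelection {(0, 0), (Pi.single j 1, θ)} s := by
    intro v
    by_cases h : θ ≤ v j <;> simp [s, h, utility_single, utility_zero]
    linarith
  have hrev : revSel D s = θ * D.real {v | θ ≤ v j} := by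
    have : (fun v => (s v).2) = {v | θ ≤ v j}.indicator fun _ => θ := by
      ext v
      by_cases h : θ ≤ v j <;> simp [s, h]
    rw [revSel, this, integral_indicator_const _ (measurableSet_le measurable_const
      (measurable_pi_apply j)), smul_eq_mul, mul_comm]
  rw [← hrev]
  exact (revSel_le_Rev hs).trans (Rev_le_OPT hH hD (isMenu_postedPrice j θ))

lemma one_le_OPT (hH : 0 ≤ H) (hD : ∀ᵐ v ∂D, ∀ j, v j ∈ Set.Icc 1 H) (j : Fin m) :
    1 ≤ OPT D := by
  have hj : D {v | 1 ≤ v j} = 1 :=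
    (mem_ae_iff_prob_eq_one (measurableSet_le measurable_const (measurable_pi_apply j))).1
      (by filter_upwards [hD] with v hv using (hv j).1)
  have := mul_measureReal_le_OPT hH (by filter_upwards [hD] with v hv using fun i => (hv i).2) j 1
  rwa [measureReal_def, hj, ENNReal.toReal_one, one_mul] at this

end PostedPrice

noncomputable section FloorLog

def floorLog (b x : ℝ) : ℕ := ⌊Real.logb b x⌋₊

variable {b x y : ℝ}

lemma pow_floorLog_le (hb : 1 < b) (hx : 1 ≤ x) : b ^ floorLog b x ≤ x := by
  have := (Real.le_logb_iff_rpow_le hb (by linarith)).1 (Nat.floor_le (Real.logb_nonneg hb hx))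
  rwa [Real.rpow_natCast] at this

lemma lt_pow_floorLog_succ (hb : 1 < b) (hx : 0 < x) : x < b ^ (floorLog b x + 1) := by
  have := (Real.logb_lt_iff_lt_rpow hb hx).1 (Nat.lt_floor_add_one _)
  exact_mod_cast this

lemma floorLog_mono (hb : 1 < b) (hx : 0 < x) (hxy : x ≤ y) : floorLog b x ≤ floorLog b y :=
  Nat.floor_le_floor (Real.logb_le_logb_of_le hb hx hxy)

lemma floorLog_le_logb (hb : 1 < b) (hx : 1 ≤ x) : (floorLog b x : ℝ) ≤ Real.logb b x :=
  Nat.floor_le (Real.logb_nonneg hb hx)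

lemma floorLog_one_add_le {δ x : ℝ} (hδ : 0 < δ) (hδ1 : δ ≤ 1) (hx : 1 ≤ x) :
    (floorLog (1 + δ) x : ℝ) ≤ 2 * Real.logb 2 x / δ := by
  have hlog1 : δ / 2 ≤ Real.log (1 + δ) := by
    have h := Real.one_sub_inv_le_log_of_pos (by linarith : 0 < 1 + δ)
    have h' : 1 - (1 + δ)⁻¹ = δ / (1 + δ) := by field_simp; ring
    rw [h'] at h
    exact (div_le_div_of_nonneg_left hδ.le (by linarith) (by linarith)).trans h
  have hlogx : Real.log x ≤ Real.logb 2 x := by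
    rw [Real.logb, le_div_iff₀ (Real.log_pos one_lt_two)]
    exact mul_le_of_le_one_right (Real.log_nonneg hx) (by linarith [Real.log_two_lt_d9])
  calc (floorLog (1 + δ) x : ℝ) ≤ Real.log x / Real.log (1 + δ) :=
        floorLog_le_logb (by linarith) hx
    _ ≤ Real.logb 2 x / (δ / 2) := by
        gcongr
        exact Real.logb_nonneg one_lt_two hx
    _ = 2 * Real.logb 2 x / δ := by ring

end FloorLog

section Dyadic

variable {m : ℕ} {D : Measure (Fin m → ℝ)} [IsProbabilityMeasure D] {H : ℝ}

lemma one_le_logb_two (hH : 2 ≤ H) : 1 ≤ Real.logb 2 H := by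
  simpa using Real.logb_le_logb_of_le one_lt_two two_pos hH

lemma integrable_eval (hD : ∀ᵐ v ∂D, ∀ j, v j ∈ Set.Icc 1 H) (j : Fin m) :
    Integrable (fun v => v j) D :=
  Integrable.of_bound (measurable_pi_apply j).aestronglyMeasurable H
    (by filter_upwards [hD] with v hv using abs_le.2 ⟨by linarith [(hv j).1, (hv j).2], (hv j).2⟩)

lemma le_two_mul_sum_dyadic {x : ℝ} (hx : 1 ≤ x) (hxH : x ≤ H) :
    x ≤ 2 * ∑ k ∈ Finset.range (floorLog 2 H + 1), if (2 : ℝ) ^ k ≤ x then (2 : ℝ) ^ k else 0 := by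
  set k := floorLog 2 x
  have hk : k ∈ Finset.range (floorLog 2 H + 1) :=
    Finset.mem_range.2 (Nat.lt_succ_of_le (floorLog_mono one_lt_two (by linarith) hxH))
  have h2k : (2 : ℝ) ^ k ≤ x := pow_floorLog_le one_lt_two hx
  have hx2k : x < 2 * 2 ^ k := by
    simpa [pow_succ, mul_comm] using lt_pow_floorLog_succ one_lt_two (by linarith : 0 < x)
  calc x ≤ 2 * if (2 : ℝ) ^ k ≤ x then (2 : ℝ) ^ k else 0 := by rw [if_pos h2k]; exact hx2k.le
    _ ≤ _ := by
      gcongr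
      exact Finset.single_le_sum (f := fun i => if (2 : ℝ) ^ i ≤ x then (2 : ℝ) ^ i else 0)
        (fun i _ => by positivity) hk

lemma integral_le_four_logb_mul_OPT (hH : 2 ≤ H) (hD : ∀ᵐ v ∂D, ∀ j, v j ∈ Set.Icc 1 H)
    (j : Fin m) : ∫ v, v j ∂D ≤ 4 * Real.logb 2 H * OPT D := by
  set K := floorLog 2 H
  set f : ℕ → (Fin m → ℝ) → ℝ := fun k v => if (2 : ℝ) ^ k ≤ v j then (2 : ℝ) ^ k else 0
  have hmeas (k : ℕ) : MeasurableSet {v : Fin m → ℝ | (2 : ℝ) ^ k ≤ v j} :=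
    measurableSet_le measurable_const (measurable_pi_apply j)
  have hf (k : ℕ) : f k = {v | (2 : ℝ) ^ k ≤ v j}.indicator fun _ => (2 : ℝ) ^ k := by
    ext v
    simp [f, Set.indicator_apply]
  have hint (k : ℕ) : Integrable (f k) D := hf k ▸ (integrable_const _).indicator (hmeas k)
  have hterm (k : ℕ) : ∫ v, f k v ∂D ≤ OPT D := by
    rw [hf k, integral_indicator_const _ (hmeas k), smul_eq_mul, mul_comm]
    exact mul_measureReal_le_OPT (by linarith)
      (by filter_upwards [hD] with v hv using fun i => (hv i).2) j _
  have hOPT : 0 ≤ OPT D := zero_le_one.trans (one_le_OPT (by linarith) hD j)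
  have hlog := one_le_logb_two hH
  have hK : (K : ℝ) + 1 ≤ 2 * Real.logb 2 H := by
    linarith [floorLog_le_logb one_lt_two (by linarith : (1 : ℝ) ≤ H)]
  calc ∫ v, v j ∂D ≤ ∫ v, 2 * ∑ k ∈ Finset.range (K + 1), f k v ∂D :=
        integral_mono_ae (integrable_eval hD j)
          ((integrable_finsetSum _ fun k _ => hint k).const_mul 2)
          (by filter_upwards [hD] with v hv using le_two_mul_sum_dyadic (hv j).1 (hv j).2)
    _ = 2 * ∑ k ∈ Finset.range (K + 1), ∫ v, f k v ∂D := by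
        rw [integral_const_mul, integral_finsetSum _ fun k _ => hint k]
    _ ≤ 2 * ∑ _k ∈ Finset.range (K + 1), OPT D := by gcongr with k; exact hterm k
    _ = 2 * ((K : ℝ) + 1) * OPT D := by simp; ring
    _ ≤ 4 * Real.logb 2 H * OPT D := by nlinarith

end Dyadic

section Grid

open Finset

variable {m L : ℕ}

lemma Monotone.le_iff_lt_card_filter {κ : Fin m → Fin L} (hκ : Monotone κ) (i : Fin m)
    (k : Fin L) : κ i ≤ k ↔ (i : ℕ) < #{j | κ j ≤ k} := by
  constructor
  · intro h
    have := card_le_card fun j (hj : j ∈ Iic i) =>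
      mem_filter.2 ⟨mem_univ j, (hκ (mem_Iic.1 hj)).trans h⟩
    rw [Fin.card_Iic] at this
    omega
  · intro h
    by_contra hik
    have := card_le_card fun j (hj : j ∈ ({j | κ j ≤ k} : Finset (Fin m))) =>
      mem_Iio.2 (lt_of_not_ge fun hij => hik ((hκ hij).trans (mem_filter.1 hj).2))
    rw [Fin.card_Iio] at this
    omega

/-- A monotone map is determined by how many of its values lie below each threshold. -/
lemma card_monotone_le (m L : ℕ) : #{κ : Fin m → Fin L | Monotone κ} ≤ (m + 1) ^ L := by
  let count (κ : Fin m → Fin L) (k : Fin L) : Fin (m + 1) :=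
    ⟨#{j | κ j ≤ k}, Nat.lt_succ_of_le ((card_filter_le _ _).trans_eq (card_fin m))⟩
  have hinj : Set.InjOn count {κ | Monotone κ} := by
    intro κ₁ h₁ κ₂ h₂ heq
    funext i
    have hiff (k : Fin L) : κ₁ i ≤ k ↔ κ₂ i ≤ k := by
      rw [Monotone.le_iff_lt_card_filter h₁, Monotone.le_iff_lt_card_filter h₂]
      exact iff_of_eq (congrArg (fun c : Fin (m + 1) => (i : ℕ) < c) (congrFun heq k))
    exact le_antisymm ((hiff _).2 le_rfl) ((hiff _).1 le_rfl)
  calc #{κ : Fin m → Fin L | Monotone κ} ≤ #(univ : Finset (Fin L → Fin (m + 1))) :=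
        card_le_card_of_injOn count (fun _ _ => mem_univ _) (by simpa using hinj)
    _ = (m + 1) ^ L := by simp

noncomputable def monotoneGrid (m : ℕ) (H δ : ℝ) : Finset (Fin m → ℝ) :=
  ({κ : Fin m → Fin (floorLog (1 + δ) H + 1) | Monotone κ} : Finset _).image
    fun κ j => (1 + δ) ^ (κ j : ℕ)

lemma card_monotoneGrid_le (H δ : ℝ) :
    #(monotoneGrid m H δ) ≤ (m + 1) ^ (floorLog (1 + δ) H + 1) :=
  card_image_le.trans (card_monotone_le _ _)

lemma succ_pow_add_one_le (hm : 2 ≤ m) (L : ℕ) : (m + 1) ^ L + 1 ≤ m ^ (2 * L + 1) := by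
  have h1 : (m + 1) ^ L ≤ m ^ (2 * L) := by
    rw [pow_mul]
    exact Nat.pow_le_pow_left (by nlinarith) L
  have h2 : 1 ≤ m ^ (2 * L) := Nat.one_le_pow _ _ (by omega)
  rw [pow_succ]
  nlinarith

lemma measurableSet_monotone_Icc (H : ℝ) :
    MeasurableSet {v : Fin m → ℝ | (∀ j, v j ∈ Set.Icc 1 H) ∧ Monotone v} := by
  have hIcc : IsClosed {v : Fin m → ℝ | ∀ j, v j ∈ Set.Icc 1 H} := by
    simpa [Set.pi] using
      isClosed_set_pi (i := Set.univ) fun (_ : Fin m) _ => isClosed_Icc (a := (1 : ℝ)) (b := H)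
  exact (hIcc.inter isClosed_monotone).measurableSet

lemma exists_mem_monotoneGrid {δ H : ℝ} (hδ : 0 < δ) {v : Fin m → ℝ} (hv : Monotone v)
    (hvH : ∀ j, v j ∈ Set.Icc 1 H) :
    ∃ w ∈ monotoneGrid m H δ,
      ∀ j, 0 < w j ∧ w j ≤ v j ∧ v j ≤ (1 + δ) * w j := by
  have hb : 1 < 1 + δ := by linarith
  have hpos (j : Fin m) : 0 < v j := by linarith [(hvH j).1]
  refine ⟨fun j => (1 + δ) ^ floorLog (1 + δ) (v j), mem_image.2 ⟨fun j =>
    ⟨floorLog (1 + δ) (v j), Nat.lt_succ_of_le (floorLog_mono hb (hpos j) (hvH j).2)⟩, ?_, rfl⟩,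
    fun j => ⟨by positivity, pow_floorLog_le hb (hvH j).1, ?_⟩⟩
  · exact mem_filter.2
      ⟨mem_univ _, fun i j hij => Fin.mk_le_mk.2 (floorLog_mono hb (hpos i) (hv hij))⟩
  · rw [← pow_succ']
    exact (lt_pow_floorLog_succ hb (hpos j)).le

end Grid

section Transfer

variable {m : ℕ}

def discount (t : ℝ) (e : Entry m) : Entry m := (e.1, t * e.2)

lemma sum_mul_le_mul_sum_mul {u u' x : Fin m → ℝ} {c : ℝ} (hu : ∀ j, u j ≤ c * u' j)
    (hx : ∀ j, 0 ≤ x j) : ∑ j, u j * x j ≤ c * ∑ j, u' j * x j := by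
  rw [Finset.mul_sum]
  exact Finset.sum_le_sum fun j _ => by
    rw [← mul_assoc]
    exact mul_le_mul_of_nonneg_right (hu j) (hx j)

lemma price_sub_le_of_prefers {δ ε : ℝ} (hε : 0 < ε) (hδ : 0 ≤ δ) (hδ1 : δ ≤ 1)
    {u u' : Fin m → ℝ} (hu : ∀ j, u j ≤ (1 + δ) * u' j) (hu' : ∀ j, u' j ≤ (1 + δ) * u j)
    (hu'0 : ∀ j, 0 ≤ u' j) {x y : Entry m} (hx : ∀ j, 0 ≤ x.1 j) (hy : ∀ j, 0 ≤ y.1 j)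
    (hxy : utility u y ≤ utility u x)
    (hyx : utility u' (discount (1 - ε) x) ≤ utility u' (discount (1 - ε) y)) :
    x.2 - y.2 ≤ 3 * δ / ε * ∑ j, u' j * x.1 j := by
  set Ax := ∑ j, u j * x.1 j
  set Ay := ∑ j, u j * y.1 j
  set Bx := ∑ j, u' j * x.1 j
  set By := ∑ j, u' j * y.1 j
  set p := x.2 - y.2
  have hBx : 0 ≤ Bx := Finset.sum_nonneg fun j _ => mul_nonneg (hu'0 j) (hx j)
  simp only [utility, discount] at hxy hyx
  have key : (δ + ε) * p ≤ (2 * δ + δ ^ 2) * Bx := by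
    have : (1 + δ) * p ≤ (1 + δ) ^ 2 * Bx - Bx + (1 - ε) * p :=
      calc (1 + δ) * p ≤ (1 + δ) * (Ax - Ay) := by gcongr; linarith
        _ ≤ (1 + δ) * Ax - By := by linarith [sum_mul_le_mul_sum_mul hu' hy]
        _ ≤ (1 + δ) * Ax - Bx + (1 - ε) * p := by linarith
        _ ≤ (1 + δ) ^ 2 * Bx - Bx + (1 - ε) * p := by
          rw [sq, mul_assoc]
          gcongr
          exact sum_mul_le_mul_sum_mul hu hx
    linarith
  rw [div_mul_eq_mul_div, le_div_iff₀ hε]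
  rcases le_or_gt p 0 with hp | hp
  · nlinarith [mul_nonneg hδ hBx]
  · nlinarith [mul_nonneg hδ hp.le, mul_nonneg (mul_nonneg (by linarith : (0 : ℝ) ≤ 1 - δ) hδ) hBx]

end Transfer

section GridMenu

open Finset

variable {m : ℕ} {ε : ℝ} {A : Finset (Entry m)} {W : Finset (Fin m → ℝ)}

noncomputable def gridMenu (ε : ℝ) (A : Finset (Entry m)) (W : Finset (Fin m → ℝ)) :
    Finset (Entry m) :=
  insert (0, 0) (W.image fun w => discount (1 - ε) (canonicalSel (A.image (discount (1 - ε))) w))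

lemma IsMenu.image_discount (hA : IsMenu m A) (t : ℝ) : IsMenu m (A.image (discount t)) :=
  ⟨mem_image.2 ⟨(0, 0), hA.1, by simp [discount]⟩, by
    simp only [forall_mem_image]
    exact fun e he => hA.2 e he⟩

lemma exists_discount_eq_of_mem_gridMenu (hA : IsMenu m A) {e : Entry m}
    (he : e ∈ gridMenu ε A W) : ∃ e' ∈ A.image (discount (1 - ε)), discount (1 - ε) e' = e := by
  have hA' := hA.image_discount (1 - ε)
  rcases mem_insert.1 he with rfl | he
  · exact ⟨(0, 0), hA'.1, by simp [discount]⟩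
  · obtain ⟨w, -, rfl⟩ := mem_image.1 he
    exact ⟨_, (isSelection_canonicalSel hA'.1 w).1, rfl⟩

lemma IsMenu.gridMenu (hA : IsMenu m A) : IsMenu m (gridMenu ε A W) :=
  ⟨mem_insert_self _ _, fun _ he => by
    obtain ⟨e', he', rfl⟩ := exists_discount_eq_of_mem_gridMenu hA he
    exact (hA.image_discount _).2 e' he'⟩

lemma card_gridMenu_le : #(gridMenu ε A W) ≤ #W + 1 :=
  (card_insert_le _ _).trans (Nat.succ_le_succ card_image_le)

lemma le_price_gridMenu (hε : 0 < ε) (hε1 : ε ≤ 1) {δ : ℝ} (hδ : 0 ≤ δ) (hδ1 : δ ≤ 1)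
    (hA : IsMenu m A) {s : (Fin m → ℝ) → Entry m} (hs : IsSelection A s) {v w : Fin m → ℝ}
    (hw : w ∈ W) (hwv : ∀ j, 0 ≤ w j ∧ w j ≤ v j ∧ v j ≤ (1 + δ) * w j) {b : ℝ} (hb : 0 ≤ b)
    (hvb : ∀ j, v j ≤ b) :
    (1 - ε) ^ 2 * (s v).2 - 6 * δ / ε * b ≤ (canonicalSel (gridMenu ε A W) v).2 := by
  set A' := A.image (discount (1 - ε))
  have hA' : IsMenu m A' := hA.image_discount _
  have hs' : IsSelection A' (canonicalSel A') := isSelection_canonicalSel hA'.1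
  have hsM := isSelection_canonicalSel (hA.gridMenu (ε := ε) (W := W)).1
  obtain ⟨a₀, ha₀, h₀⟩ := mem_image.1 (hs' w).1
  obtain ⟨e₂, he₂, h₂⟩ := exists_discount_eq_of_mem_gridMenu hA (hsM v).1
  have hv0 (j : Fin m) : 0 ≤ v j := (hwv j).1.trans (hwv j).2.1
  have hvw (j : Fin m) : v j ≤ (1 + δ) * w j := (hwv j).2.2
  have hwv' (j : Fin m) : w j ≤ (1 + δ) * v j :=
    (hwv j).2.1.trans (le_mul_of_one_le_left (hv0 j) (by linarith))
  have hc : 0 ≤ 3 * δ / ε := by positivity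
  have h₁ : (s v).2 - a₀.2 ≤ 3 * δ / ε * b := by
    refine (price_sub_le_of_prefers hε hδ hδ1 hvw hwv' (fun j => (hwv j).1)
      (hA.2 _ (hs v).1).1 (hA.2 _ ha₀).1 ((hs v).2 _ ha₀) ?_).trans ?_
    · rw [h₀]
      exact (hs' w).2 _ (mem_image_of_mem _ (hs v).1)
    · exact mul_le_mul_of_nonneg_left
        ((hA.2 _ (hs v).1).sum_mul_le hb fun j => (hwv j).2.1.trans (hvb j)) hc
  have h₂' : (1 - ε) * a₀.2 - e₂.2 ≤ 3 * δ / ε * b := by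
    have hx : (canonicalSel A' w).2 = (1 - ε) * a₀.2 := by rw [← h₀]; rfl
    rw [← hx]
    refine (price_sub_le_of_prefers hε hδ hδ1 hwv' hvw hv0 (hA'.2 _ (hs' w).1).1
      (hA'.2 _ he₂).1 ((hs' w).2 _ he₂) ?_).trans ?_
    · rw [h₂]
      exact (hsM v).2 _ (mem_insert_of_mem (mem_image_of_mem _ hw))
    · exact mul_le_mul_of_nonneg_left ((hA'.2 _ (hs' w).1).sum_mul_le hb hvb) hc
  have hC : 0 ≤ 3 * δ / ε * b := mul_nonneg hc hb
  have h1ε : 0 ≤ 1 - ε := by linarith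
  have h6 : 6 * δ / ε * b = 2 * (3 * δ / ε * b) := by ring
  rw [← h₂, h6]
  simp only [discount]
  nlinarith [mul_le_mul_of_nonneg_left h₁ (sq_nonneg (1 - ε)), mul_le_mul_of_nonneg_left h₂' h1ε,
    mul_nonneg h1ε hC, mul_nonneg (mul_nonneg h1ε h1ε) hC]

end GridMenu

section Approximation

variable {m : ℕ} {D : Measure (Fin m → ℝ)} [IsProbabilityMeasure D] {H ε δ : ℝ}

lemma sub_le_Rev_gridMenu (hε : 0 < ε) (hε1 : ε ≤ 1) (hδ : 0 < δ) (hδ1 : δ ≤ 1)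
    (hD : ∀ᵐ v ∂D, (∀ j, v j ∈ Set.Icc 1 H) ∧ Monotone v) {j₀ : Fin m} (hj₀ : ∀ j, j ≤ j₀)
    {A : Finset (Entry m)} (hA : IsMenu m A) {s : (Fin m → ℝ) → Entry m} (hs : IsSelection A s)
    (hint : Integrable (fun v => (s v).2) D) :
    (1 - ε) ^ 2 * revSel D s - 6 * δ / ε * ∫ v, v j₀ ∂D ≤
      Rev D (gridMenu ε A (monotoneGrid m H δ)) := by
  set M := gridMenu ε A (monotoneGrid m H δ)
  have hM : IsMenu m M := hA.gridMenu
  have hvj := integrable_eval (by filter_upwards [hD] with v hv using hv.1) j₀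
  calc (1 - ε) ^ 2 * revSel D s - 6 * δ / ε * ∫ v, v j₀ ∂D
        = ∫ v, ((1 - ε) ^ 2 * (s v).2 - 6 * δ / ε * v j₀) ∂D := by
          rw [integral_sub (hint.const_mul _) (hvj.const_mul _), integral_const_mul,
            integral_const_mul, revSel]
    _ ≤ ∫ v, (canonicalSel M v).2 ∂D := by
          refine integral_mono_ae ((hint.const_mul _).sub (hvj.const_mul _))
            (integrable_price_canonicalSel hM.1) ?_
          filter_upwards [hD] with v ⟨hvH, hv⟩
          obtain ⟨w, hw, hwv⟩ := exists_mem_monotoneGrid hδ hv hvH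
          exact le_price_gridMenu hε hε1 hδ.le hδ1 hA hs hw (fun j => ⟨(hwv j).1.le, (hwv j).2⟩)
            (by linarith [(hvH j₀).1]) fun j => hv (hj₀ j)
    _ ≤ Rev D M := revSel_le_Rev (isSelection_canonicalSel hM.1)

lemma div_logb_mem_Ioc (hH : 2 ≤ H) (hε : 0 < ε) (hε1 : ε ≤ 1) :
    ε ^ 2 / (384 * Real.logb 2 H) ∈ Set.Ioc 0 1 := by
  have ha := one_le_logb_two hH
  exact ⟨by positivity, by rw [div_le_one (by positivity)]; nlinarith⟩

/-- The discount `ε / 4` and the grid step `δ` are chosen so that the loss `6 δ / (ε / 4)` times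
the bound `4 log₂ H · OPT` on the expected top value is `(ε / 4) OPT`. -/
lemma exists_isMenu_le_Rev_gridMenu (hm : 0 < m) (hH : 2 ≤ H) (hε : 0 < ε) (hε1 : ε < 1 / 2)
    (hD : ∀ᵐ v ∂D, (∀ j, v j ∈ Set.Icc 1 H) ∧ Monotone v)
    (hδ : δ = ε ^ 2 / (384 * Real.logb 2 H)) :
    ∃ A, IsMenu m A ∧ (1 - ε) * OPT D ≤ Rev D (gridMenu (ε / 4) A (monotoneGrid m H δ)) := by
  have hDIcc : ∀ᵐ v ∂D, ∀ j, v j ∈ Set.Icc 1 H := by filter_upwards [hD] with v hv using hv.1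
  have hO := one_le_OPT (by linarith) hDIcc ⟨0, hm⟩
  obtain ⟨A, s, hA, hs, hrev⟩ := exists_isSelection_lt_revSel (D := D) (r := OPT D - ε / 8)
    (by linarith)
  have hint : Integrable (fun v => (s v).2) D := by
    by_contra h
    rw [revSel, integral_undef h] at hrev
    linarith
  set j₀ : Fin m := ⟨m - 1, by omega⟩
  have hj₀ (j : Fin m) : j ≤ j₀ := Fin.mk_le_mk.2 (by omega)
  obtain ⟨hδ0, hδ1⟩ := hδ ▸ div_logb_mem_Ioc hH hε (by linarith)
  refine ⟨A, hA, le_trans ?_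
    (sub_le_Rev_gridMenu (by linarith) (by linarith) hδ0 hδ1 hD hj₀ hA hs hint)⟩
  have htop := mul_le_mul_of_nonneg_left (integral_le_four_logb_mul_OPT hH hDIcc j₀)
    (by positivity : 0 ≤ 6 * δ / (ε / 4))
  have hloss : 6 * δ / (ε / 4) * (4 * Real.logb 2 H * OPT D) = ε / 4 * OPT D := by
    have := one_le_logb_two hH
    rw [hδ]
    field_simp
    ring
  nlinarith [mul_le_mul_of_nonneg_left hrev.le (sq_nonneg (1 - ε / 4))]

lemma two_mul_floorLog_add_le (hH : 2 ≤ H) (hε : 0 < ε) (hε1 : ε ≤ 1)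
    (hδ : δ = ε ^ 2 / (384 * Real.logb 2 H)) (b : ℝ) :
    2 * ((floorLog (1 + δ) H : ℝ) + 1) + 1 ≤ 1600 * (Real.logb 2 H ^ 3 + b ^ 2) / ε ^ 2 := by
  set a := Real.logb 2 H
  have ha : 1 ≤ a := one_le_logb_two hH
  obtain ⟨hδ0, hδ1⟩ := hδ ▸ div_logb_mem_Ioc hH hε hε1
  have hL := floorLog_one_add_le hδ0 hδ1 (by linarith : (1 : ℝ) ≤ H)
  have hL' : 2 * a / δ * ε ^ 2 = 768 * a ^ 2 := by
    rw [hδ]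
    field_simp
    ring
  rw [le_div_iff₀ (by positivity)]
  nlinarith [sq_nonneg b, mul_le_mul_of_nonneg_right hL (sq_nonneg ε),
    mul_le_mul_of_nonneg_left ha (sq_nonneg a)]

end Approximation

/-- **Theorem 2 (monotone case).** There is a universal constant `c > 0` such that for every
`m ≥ 2`, `H ≥ 2`, `ε ∈ (0, 1/2)` and every distribution `D` supported on the monotone
valuations in `[1, H]^m`, there is a menu with at most
`m^(c·((log₂ H)³ + (log₂(1/ε))²)/ε²)` entries whose revenue is at least a `(1 - ε)` fraction
of the optimal revenue. -/
theorem menu_size_monotone :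
    ∃ c : ℝ, 0 < c ∧
      ∀ (m : ℕ), 2 ≤ m → ∀ H : ℝ, 2 ≤ H → ∀ ε : ℝ, 0 < ε → ε < 1 / 2 →
        ∀ D : Measure (Fin m → ℝ), IsProbabilityMeasure D →
          D {v | (∀ j, v j ∈ Set.Icc (1 : ℝ) H) ∧ Monotone v} = 1 →
          ∃ M : Finset (Entry m), IsMenu m M ∧
            (M.card : ℝ) ≤
              (m : ℝ) ^ (c * ((Real.logb 2 H) ^ 3 + (Real.logb 2 (1 / ε)) ^ 2) / ε ^ 2) ∧
            (1 - ε) * OPT D ≤ Rev D M := by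
  refine ⟨1600, by norm_num, fun m hm H hH ε hε hε2 D _ hS => ?_⟩
  have hD : ∀ᵐ v ∂D, (∀ j, v j ∈ Set.Icc (1 : ℝ) H) ∧ Monotone v :=
    (mem_ae_iff_prob_eq_one (measurableSet_monotone_Icc H)).2 hS
  set δ := ε ^ 2 / (384 * Real.logb 2 H) with hδ
  set L := floorLog (1 + δ) H + 1
  obtain ⟨A, hA, hrev⟩ := exists_isMenu_le_Rev_gridMenu (by omega) hH hε hε2 hD hδ
  refine ⟨_, hA.gridMenu, ?_, hrev⟩
  calc ((gridMenu (ε / 4) A (monotoneGrid m H δ)).card : ℝ) ≤ ((m + 1) ^ L + 1 : ℕ) := by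
        exact_mod_cast card_gridMenu_le.trans (Nat.succ_le_succ (card_monotoneGrid_le H δ))
    _ ≤ (m : ℝ) ^ (2 * L + 1 : ℕ) := by exact_mod_cast succ_pow_add_one_le hm L
    _ = (m : ℝ) ^ ((2 * L + 1 : ℕ) : ℝ) := (Real.rpow_natCast _ _).symm
    _ ≤ _ := by
        refine Real.rpow_le_rpow_of_exponent_le (by exact_mod_cast (by omega : 1 ≤ m)) ?_
        exact_mod_cast two_mul_floorLog_add_le hH hε (by linarith) hδ _
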